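/- arXiv:2201.00667 — 2 statements merged into one kernel-verified Lean document; each statement's English description precedes it below -/
import Mathlib

section
/- Let Z be a random real symmetric n×n orthogonal projection matrix (taking finitely many values) with E[Z] positive definite. Then the convergence rate ρ = 1 − λ_min(E[Z]) satisfies 0 ≤ 1 − E[rank(Z)]/n ≤ ρ < 1. -/
open Matrix BigOperators

/-!
An idempotent matrix is the projection onto its range, so its rank equals its trace; hence
`E[rank Z] = trace E[Z]`, which is the sum of the eigenvalues of `E[Z]` and so at least
`n · λ_min(E[Z])`. Each rank is at most `n`, and `λ_min(E[Z]) > 0` by positive definiteness.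
-/

theorem Matrix.rank_eq_trace_of_isIdempotentElem {K m : Type*} [Field K] [Fintype m]
    [DecidableEq m] {A : Matrix m m K} (hA : IsIdempotentElem A) : (A.rank : K) = A.trace := by
  have h : IsIdempotentElem (toLin' A) := hA.map toLinAlgEquiv'
  rw [← Matrix.trace_toLin'_eq, ((LinearMap.isProj_range_iff_isIdempotentElem _).2 h).trace]
  rfl

theorem Matrix.IsHermitian.card_mul_iInf_eigenvalues_le_trace {𝕜 m : Type*} [RCLike 𝕜]
    [Fintype m] [DecidableEq m] {A : Matrix m m 𝕜} (hA : A.IsHermitian) :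
    (Fintype.card m : ℝ) * ⨅ i, hA.eigenvalues i ≤ RCLike.re A.trace := by
  rw [hA.trace_eq_sum_eigenvalues, map_sum]
  simp only [RCLike.ofReal_re]
  rw [← nsmul_eq_mul]
  exact Finset.card_nsmul_le_sum _ _ _ fun i _ => ciInf_le (Finite.bddBelow_range _) i

open scoped ComplexOrder in
theorem Matrix.PosDef.iInf_eigenvalues_pos {𝕜 m : Type*} [RCLike 𝕜] [Fintype m] [DecidableEq m]
    [Nonempty m] {A : Matrix m m 𝕜} (hA : A.PosDef) : 0 < ⨅ i, hA.1.eigenvalues i := by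
  obtain ⟨i, hi⟩ := exists_eq_ciInf_of_finite (f := hA.1.eigenvalues)
  exact hi ▸ hA.eigenvalues_pos i

theorem rate_bounds_general {n N : ℕ} [NeZero n]
    (Z : Fin N → Matrix (Fin n) (Fin n) ℝ)
    (w : Fin N → ℝ) (hw : ∀ i, 0 ≤ w i) (hw1 : ∑ i, w i = 1)
    (hproj : ∀ i, Z i * Z i = Z i)
    (hpd : (∑ i, w i • Z i).PosDef) :
    0 ≤ 1 - (∑ i, w i * ((Z i).rank : ℝ)) / n
    ∧ 1 - (∑ i, w i * ((Z i).rank : ℝ)) / n ≤ 1 - ⨅ j, hpd.1.eigenvalues j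
    ∧ 1 - ⨅ j, hpd.1.eigenvalues j < 1 := by
  have hn : (0 : ℝ) < n := by exact_mod_cast Nat.pos_of_neZero n
  have htrace : (∑ i, w i • Z i).trace = ∑ i, w i * ((Z i).rank : ℝ) := by
    simp only [trace_sum, trace_smul, smul_eq_mul, rank_eq_trace_of_isIdempotentElem (hproj _)]
  have hle_n : ∑ i, w i * ((Z i).rank : ℝ) ≤ n :=
    calc ∑ i, w i * ((Z i).rank : ℝ) ≤ ∑ i, w i * n := by
          gcongr with i
          · exact hw i
          · simpa using (Z i).rank_le_card_width
      _ = n := by rw [← Finset.sum_mul, hw1, one_mul]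
  have hmin_le : n * ⨅ j, hpd.1.eigenvalues j ≤ ∑ i, w i * ((Z i).rank : ℝ) := by
    simpa [htrace] using hpd.1.card_mul_iInf_eigenvalues_le_trace
  refine ⟨?_, ?_, ?_⟩
  · rw [sub_nonneg, div_le_one hn]; exact hle_n
  · rw [sub_le_sub_iff_left, le_div_iff₀ hn, mul_comm]; exact hmin_le
  · linarith [PosDef.iInf_eigenvalues_pos hpd]

/-- The sketch-and-project convergence rate `ρ = 1 − λ_min(E[Z])` satisfies
`0 ≤ 1 − E[rank Z]/n ≤ ρ < 1` when each realization of `Z` is a symmetric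
orthogonal projection and `E[Z]` is positive definite. -/
theorem rate_bounds {n N : ℕ} [NeZero n]
    (Z : Fin N → Matrix (Fin n) (Fin n) ℝ)
    (w : Fin N → ℝ) (hw : ∀ i, 0 ≤ w i) (hw1 : ∑ i, w i = 1)
    (hsym : ∀ i, (Z i)ᵀ = Z i) (hproj : ∀ i, Z i * Z i = Z i)
    (hpd : (∑ i, w i • Z i).PosDef) :
    0 ≤ 1 - (∑ i, w i * ((Z i).rank : ℝ)) / n
    ∧ 1 - (∑ i, w i * ((Z i).rank : ℝ)) / n ≤ 1 - ⨅ j, hpd.1.eigenvalues j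
    ∧ 1 - ⨅ j, hpd.1.eigenvalues j < 1 :=
  rate_bounds_general Z w hw hw1 hproj hpd
end

section
/- Let Z₁,...,Z_q be symmetric orthogonal projections in ℝ^{n×n}, p ∈ Δ_q with Σpᵢ Zᵢ positive definite, and let x⁰, x⋆ ∈ ℝⁿ. Define the random sequence x^{t+1} = x^t − Z_{i_t}(x^t − x⋆) where i_t ∼ p i.i.d. Then E[‖x^t − x⋆‖² | x⁰] ≤ (1 − λ_min(Σᵢ pᵢZᵢ))^t ‖x⁰ − x⋆‖². -/
/-!
For a symmetric projection `Zᵢ`, Pythagoras gives `‖e − Zᵢ e‖² = ‖e‖² − eᵀ Zᵢ e`, so one step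
averaged over `i ∼ p` leaves `‖e‖² − eᵀ (∑ pᵢ Zᵢ) e ≤ (1 − λ_min) ‖e‖²` of the squared error.
Summing out the last index of the i.i.d. sequence and inducting on `t` gives the bound; the
factor `1 − λ_min` is nonnegative because the averaged squared error it dominates is.
-/

open Matrix BigOperators

/-- The trajectory of the sketch-and-project iteration driven by a finite index
sequence `σ`: `x⁰ = x0`, `x^{t+1} = x^t − Z_{σ_t}(x^t − x⋆)`. -/
def traj {n q : ℕ} (Z : Fin q → Matrix (Fin n) (Fin n) ℝ)
    (x0 xs : Fin n → ℝ) : ∀ t : ℕ, (Fin t → Fin q) → (Fin n → ℝ)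
  | 0, _ => x0
  | (t + 1), σ =>
      traj Z x0 xs t (fun s => σ s.castSucc)
        - (Z (σ (Fin.last t))).mulVec (traj Z x0 xs t (fun s => σ s.castSucc) - xs)

open Finset

namespace Matrix

variable {m : Type*} [Fintype m]

theorem dotProduct_sub_mulVec_self_of_isProj {Z : Matrix m m ℝ} (hsym : Zᵀ = Z)
    (hproj : Z * Z = Z) (v : m → ℝ) :
    (v - Z *ᵥ v) ⬝ᵥ (v - Z *ᵥ v) = v ⬝ᵥ v - v ⬝ᵥ (Z *ᵥ v) := by
  have hZZ : (Z *ᵥ v) ⬝ᵥ (Z *ᵥ v) = v ⬝ᵥ (Z *ᵥ v) := by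
    conv_rhs => rw [← hproj, ← mulVec_mulVec, dotProduct_mulVec, ← mulVec_transpose, hsym]
  rw [dotProduct_sub, sub_dotProduct, sub_dotProduct, hZZ, dotProduct_comm (Z *ᵥ v) v]
  ring

theorem IsHermitian.iInf_eigenvalues_mul_dotProduct_self_le [DecidableEq m]
    {A : Matrix m m ℝ} (hA : A.IsHermitian) (v : m → ℝ) :
    (⨅ j, hA.eigenvalues j) * (v ⬝ᵥ v) ≤ v ⬝ᵥ (A *ᵥ v) := by
  set c := ⨅ j, hA.eigenvalues j
  have hpsd : (A - algebraMap ℝ _ c).PosSemidef := by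
    rw [posSemidef_iff_isHermitian_and_spectrum_nonneg]
    refine ⟨hA.sub (isHermitian_diagonal _), ?_⟩
    rw [← spectrum.sub_singleton_eq, hA.spectrum_real_eq_range_eigenvalues]
    rintro _ ⟨_, ⟨j, rfl⟩, _, rfl, rfl⟩
    exact sub_nonneg.2 (ciInf_le (Set.finite_range hA.eigenvalues).bddBelow j)
  have hquad := hpsd.dotProduct_mulVec_nonneg v
  simp only [star_trivial, sub_mulVec, Algebra.algebraMap_eq_smul_one, smul_mulVec, one_mulVec,
    dotProduct_sub, dotProduct_smul, smul_eq_mul] at hquad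
  linarith

end Matrix

section SketchAndProjectStep

variable {m ι : Type*} [Fintype m] [Fintype ι] {Z : ι → Matrix m m ℝ} {p : ι → ℝ}

theorem sum_mul_dotProduct_sub_mulVec_self (hsym : ∀ i, (Z i)ᵀ = Z i)
    (hproj : ∀ i, Z i * Z i = Z i) (hp1 : ∑ i, p i = 1) (v : m → ℝ) :
    ∑ i, p i * ((v - Z i *ᵥ v) ⬝ᵥ (v - Z i *ᵥ v))
      = v ⬝ᵥ v - v ⬝ᵥ ((∑ i, p i • Z i) *ᵥ v) := by
  simp only [dotProduct_sub_mulVec_self_of_isProj (hsym _) (hproj _), mul_sub, sum_sub_distrib,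
    ← sum_mul, hp1, one_mul, sum_mulVec, dotProduct_sum, smul_mulVec, dotProduct_smul, smul_eq_mul]

theorem sum_mul_dotProduct_sub_mulVec_self_le [DecidableEq m] (hsym : ∀ i, (Z i)ᵀ = Z i)
    (hproj : ∀ i, Z i * Z i = Z i) (hp1 : ∑ i, p i = 1)
    (hA : (∑ i, p i • Z i).IsHermitian) (v : m → ℝ) :
    ∑ i, p i * ((v - Z i *ᵥ v) ⬝ᵥ (v - Z i *ᵥ v)) ≤ (1 - ⨅ j, hA.eigenvalues j) * (v ⬝ᵥ v) := by
  rw [sum_mul_dotProduct_sub_mulVec_self hsym hproj hp1]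
  linarith [hA.iInf_eigenvalues_mul_dotProduct_self_le v]

theorem iInf_eigenvalues_sum_smul_le_one [DecidableEq m] [Nonempty m]
    (hsym : ∀ i, (Z i)ᵀ = Z i) (hproj : ∀ i, Z i * Z i = Z i) (hp : ∀ i, 0 ≤ p i)
    (hp1 : ∑ i, p i = 1) (hA : (∑ i, p i • Z i).IsHermitian) :
    ⨅ j, hA.eigenvalues j ≤ 1 := by
  set v : m → ℝ := fun _ => 1
  have hv : 0 < v ⬝ᵥ v := by simp [v, dotProduct, Fintype.card_pos]
  have hsum : 0 ≤ ∑ i, p i * ((v - Z i *ᵥ v) ⬝ᵥ (v - Z i *ᵥ v)) :=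
    sum_nonneg fun i _ => mul_nonneg (hp i) (dotProduct_self_star_nonneg _)
  have hstep := sum_mul_dotProduct_sub_mulVec_self_le hsym hproj hp1 hA v
  have hcv : (⨅ j, hA.eigenvalues j) * (v ⬝ᵥ v) ≤ 1 * (v ⬝ᵥ v) := by linarith
  exact le_of_mul_le_mul_right hcv hv

end SketchAndProjectStep

theorem Fin.sum_prod_mul_snoc {α R : Type*} [Fintype α] [CommSemiring R] {t : ℕ} (p : α → R)
    (f : (Fin (t + 1) → α) → R) :
    ∑ σ : Fin (t + 1) → α, (∏ s, p (σ s)) * f σ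
      = ∑ τ : Fin t → α, (∏ s, p (τ s)) * ∑ i, p i * f (Fin.snoc τ i) := by
  rw [← (Fin.snocEquiv fun _ => α).sum_comp, Fintype.sum_prod_type, sum_comm]
  refine sum_congr rfl fun τ _ => ?_
  rw [mul_sum]
  refine sum_congr rfl fun i _ => ?_
  simp only [Fin.snocEquiv, Equiv.coe_fn_mk, Fin.prod_univ_castSucc, Fin.snoc_castSucc,
    Fin.snoc_last]
  ring

theorem traj_succ_snoc_sub {n q : ℕ} (Z : Fin q → Matrix (Fin n) (Fin n) ℝ) (x0 xs : Fin n → ℝ)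
    {t : ℕ} (τ : Fin t → Fin q) (i : Fin q) :
    traj Z x0 xs (t + 1) (Fin.snoc τ i) - xs
      = (traj Z x0 xs t τ - xs) - Z i *ᵥ (traj Z x0 xs t τ - xs) := by
  simp only [traj, Fin.snoc_castSucc, Fin.snoc_last]
  abel

theorem sum_sub_sq_eq_dotProduct {m : Type*} [Fintype m] (x y : m → ℝ) :
    ∑ k, (x k - y k) ^ 2 = (x - y) ⬝ᵥ (x - y) := by
  simp [dotProduct, sq]

/-- Convergence of the nonadaptive sketch-and-project method:
`E[‖x^t − x⋆‖²] ≤ (1 − λ_min(Σᵢ pᵢZᵢ))^t ‖x⁰ − x⋆‖²`, the expectation being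
over i.i.d. indices `i_0,…,i_{t−1} ∼ p`. -/
theorem sketch_and_project_convergence {n q : ℕ} [NeZero n]
    (Z : Fin q → Matrix (Fin n) (Fin n) ℝ)
    (hsym : ∀ i, (Z i)ᵀ = Z i) (hproj : ∀ i, Z i * Z i = Z i)
    (p : Fin q → ℝ) (hp : ∀ i, 0 ≤ p i) (hp1 : ∑ i, p i = 1)
    (hpd : (∑ i, p i • Z i).PosDef) (x0 xs : Fin n → ℝ) (t : ℕ) :
    ∑ σ : Fin t → Fin q, (∏ s, p (σ s)) * ∑ k, (traj Z x0 xs t σ k - xs k) ^ 2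
      ≤ (1 - ⨅ j, hpd.1.eigenvalues j) ^ t * ∑ k, (x0 k - xs k) ^ 2 := by
  set c := ⨅ j, hpd.1.eigenvalues j
  have hc : 0 ≤ 1 - c := sub_nonneg.2 (iInf_eigenvalues_sum_smul_le_one hsym hproj hp hp1 hpd.1)
  simp only [sum_sub_sq_eq_dotProduct]
  induction t with
  | zero => simp [traj]
  | succ t ih =>
    rw [Fin.sum_prod_mul_snoc]
    calc _ ≤ ∑ τ : Fin t → Fin q, (∏ s, p (τ s)) *
            ((1 - c) * ((traj Z x0 xs t τ - xs) ⬝ᵥ (traj Z x0 xs t τ - xs))) := by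
          gcongr with τ
          · exact prod_nonneg fun s _ => hp _
          · simp only [traj_succ_snoc_sub]
            exact sum_mul_dotProduct_sub_mulVec_self_le hsym hproj hp1 hpd.1 _
      _ = (1 - c) * ∑ τ : Fin t → Fin q, (∏ s, p (τ s)) *
            ((traj Z x0 xs t τ - xs) ⬝ᵥ (traj Z x0 xs t τ - xs)) := by
          rw [mul_sum]
          exact sum_congr rfl fun τ _ => mul_left_comm _ _ _
      _ ≤ (1 - c) * ((1 - c) ^ t * ((x0 - xs) ⬝ᵥ (x0 - xs))) := by gcongr
      _ = (1 - c) ^ (t + 1) * ((x0 - xs) ⬝ᵥ (x0 - xs)) := by ring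
end
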